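/- Let n ≥ 1 and consider the dihedral group D_{2n} = ⟨a, b | a^n = b^2 = e, bab^{-1} = a^{-1}⟩ with the class function τ'_k on D_{2n} given by τ'_k(a^i) = η^{ik} + η^{-ik} and τ'_k(b a^i) = 0, where η is a primitive n-th root of unity. Then the symmetric power operations (in the pre-λ-ring of complex class functions on D_{2n} with Adams operations ψ^m(f)(g) = f(g^m)) satisfy S^{2m-1}(τ'_k) = Σ_{i=1}^{m} τ'_{(2i-1)k} and S^{2m}(τ'_k) = Σ_{i=1}^{m} τ'_{2ik} + χ_1 for every m ≥ 1, where χ_1 is the trivial character. -/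

import Mathlib

open PowerSeries

/-- Logarithmic derivative `f ↦ f' · f⁻¹` of a power series (with constant term `1`,
so that `invOfUnit f 1` is a genuine inverse). -/
noncomputable def logDeriv1 {R : Type*} [CommRing R] (f : R⟦X⟧) : R⟦X⟧ :=
  d⁄dX R f * PowerSeries.invOfUnit f 1

/-- A pre-λ-ring: a commutative ring `R` with operations `λ^n` satisfying
`λ^0(r) = 1`, `λ^1 = id` and `λ^n(r+s) = ∑_{i+j=n} λ^i(r) λ^j(s)`. -/
structure PreLambdaRing (R : Type*) [CommRing R] where
  lam : ℕ → R → R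
  lam_zero : ∀ r, lam 0 r = 1
  lam_one : ∀ r, lam 1 r = r
  lam_add : ∀ n r s, lam n (r + s) = ∑ i ∈ Finset.range (n+1), lam i r * lam (n-i) s

/-- The series `λ_t(r) = ∑ λ^i(r) t^i`. -/
noncomputable def lambdaSeries {R : Type*} [CommRing R] (L : PreLambdaRing R) (r : R) : R⟦X⟧ :=
  PowerSeries.mk fun i => L.lam i r

/-- The Adams operations, defined by `∑_{k≥1} ψ^k(r) (-t)^k = -t·(d/dt) log λ_t(r)`;
so `ψ^n(r)` is `(-1)^n` times the `t^n`-coefficient of `-t·(d/dt) log λ_t(r)`. -/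
noncomputable def adams {R : Type*} [CommRing R] (L : PreLambdaRing R) (n : ℕ) (r : R) : R :=
  (-1 : R)^n * coeff n (-(X * logDeriv1 (lambdaSeries L r)))

/-- The symmetric power operations: `S^n(r)` is the `t^n`-coefficient of
`S_t(r) = (λ_{-t}(r))⁻¹`. -/
noncomputable def symPow {R : Type*} [CommRing R] (L : PreLambdaRing R) (n : ℕ) (r : R) : R :=
  coeff n (PowerSeries.invOfUnit (rescale (-1 : R) (lambdaSeries L r)) 1)

/-- The class function `τ'_k` on the dihedral group: `τ'_k(a^i) = η^{ik} + η^{-ik}`,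
`τ'_k(b a^i) = 0`. -/
noncomputable def tauD {n : ℕ} (ζ : ℂ) (k : ℤ) : DihedralGroup n → ℂ
  | DihedralGroup.r i => ζ ^ ((i.val : ℤ) * k) + ζ ^ (-((i.val : ℤ) * k))
  | DihedralGroup.sr _ => 0

/-!
Write `S_t = ∑ S^N t^N` and `Ψ_t = ∑_{j ≥ 1} ψ^j t^j`. Differentiating `S_t · λ_{-t} = 1` gives
Newton's identity `t S_t' = Ψ_t S_t`, a first-order linear ODE whose solution with `S_0 = 1` is
unique over a torsion-free ring. If `τ(g^j) = u^j + v^j` for all `j ≥ 1`, the product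
`1 / ((1 - u t)(1 - v t))` of two geometric series solves the same ODE after evaluation at `g`, so
`S^N(τ)(g) = h_N(u, v) = ∑_{i+j=N} u^i v^j`. For `τ = τ'_k` one can take `u = η^{ik}`, `v = u⁻¹` at
`g = a^i`, and `u = 1`, `v = -1` at `g = b a^i`; the recursion
`h_{N+2} = u^{N+2} + v^{N+2} + u v h_N` then yields the stated sums.
-/

open Finset

namespace PowerSeries

variable {R S : Type*} [CommRing R] [CommRing S]

theorem derivative_map (φ : R →+* S) (f : R⟦X⟧) :
    d⁄dX S (map φ f) = map φ (d⁄dX R f) := by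
  ext n
  simp [coeff_derivative]

theorem derivative_rescale (a : R) (f : R⟦X⟧) :
    d⁄dX R (rescale a f) = C a * rescale a (d⁄dX R f) := by
  ext n
  simp only [coeff_derivative, coeff_rescale, coeff_C_mul, pow_succ]
  ring

theorem mk_pow_eq_one_add (u : R) : mk (u ^ ·) = 1 + C u * X * mk (u ^ ·) := by
  ext (_ | n)
  · simp
  · simp [mul_assoc, coeff_succ_X_mul, pow_succ']

theorem X_mul_derivative_mk_pow (u : R) :
    X * d⁄dX R (mk (u ^ ·)) = (mk (u ^ ·) - 1) * mk (u ^ ·) := by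
  set E : R⟦X⟧ := mk (u ^ ·)
  have hE : E = 1 + C u * X * E := mk_pow_eq_one_add u
  have hdE : d⁄dX R E = C u * E + C u * X * d⁄dX R E := by
    conv_lhs => rw [hE]
    simp only [map_add, derivative_one, Derivation.leibniz, derivative_C, derivative_X, smul_eq_mul]
    ring
  linear_combination (X * E) * hdE - (X * d⁄dX R E + E) * hE

theorem X_mul_derivative_mk_pow_mul_mk_pow (u v : R) :
    X * d⁄dX R (mk (u ^ ·) * mk (v ^ ·))
      = (mk (u ^ ·) - 1 + (mk (v ^ ·) - 1)) * (mk (u ^ ·) * mk (v ^ ·)) := by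
  rw [Derivation.leibniz, smul_eq_mul, smul_eq_mul]
  linear_combination mk (u ^ ·) * X_mul_derivative_mk_pow v +
    mk (v ^ ·) * X_mul_derivative_mk_pow u

theorem eq_of_X_mul_derivative_eq {K : Type*} [CommRing K] [IsAddTorsionFree K] {P F G : K⟦X⟧}
    (hP : constantCoeff P = 0) (hF : X * d⁄dX K F = P * F) (hG : X * d⁄dX K G = P * G)
    (h0 : constantCoeff F = constantCoeff G) : F = G := by
  rw [← sub_eq_zero]
  set D := F - G
  have hD : X * d⁄dX K D = P * D := by
    simp only [D, map_sub, mul_sub, hF, hG]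
  ext N
  rw [map_zero]
  induction N using Nat.strong_induction_on with
  | _ N ih =>
    rcases N with _ | N
    · simp [D, h0]
    have hN := congrArg (coeff (N + 1)) hD
    rw [coeff_succ_X_mul, coeff_derivative, coeff_mul, sum_eq_zero] at hN
    · rwa [mul_comm, ← Nat.cast_succ, ← nsmul_eq_mul, nsmul_eq_zero_iff_right N.succ_ne_zero] at hN
    · rintro ⟨_ | i, j⟩ hp
      · simp [hP]
      · rw [ih j (by simp at hp; omega), mul_zero]

theorem coeff_add_two_mk_pow_mul_mk_pow (u v : R) (N : ℕ) :
    coeff (N + 2) (mk (u ^ ·) * mk (v ^ ·))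
      = u ^ (N + 2) + v ^ (N + 2) + u * v * coeff N (mk (u ^ ·) * mk (v ^ ·)) := by
  have hu := mk_pow_eq_one_add u
  have hv := mk_pow_eq_one_add v
  have h : mk (u ^ ·) * mk (v ^ ·)
      = mk (u ^ ·) + mk (v ^ ·) - 1 + C (u * v) * X ^ 2 * (mk (u ^ ·) * mk (v ^ ·)) := by
    rw [map_mul]
    linear_combination (mk (v ^ ·) - 1) * hu + C u * X * mk (u ^ ·) * hv
  conv_lhs => rw [h]
  simp [mul_assoc, coeff_X_pow_mul', coeff_one]

theorem coeff_mk_pow_mul_mk_pow_two_mul {u v : R} (huv : u * v = 1) (m : ℕ) :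
    coeff (2 * m) (mk (u ^ ·) * mk (v ^ ·))
      = ∑ i ∈ range m, (u ^ (2 * (i + 1)) + v ^ (2 * (i + 1))) + 1 := by
  induction m with
  | zero => simp
  | succ m ih =>
    rw [mul_add_one, coeff_add_two_mk_pow_mul_mk_pow, ih, huv, sum_range_succ]
    ring

theorem coeff_mk_pow_mul_mk_pow_two_mul_add_one {u v : R} (huv : u * v = 1) (m : ℕ) :
    coeff (2 * m + 1) (mk (u ^ ·) * mk (v ^ ·))
      = ∑ i ∈ range (m + 1), (u ^ (2 * i + 1) + v ^ (2 * i + 1)) := by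
  induction m with
  | zero => simp [coeff_mul, Nat.antidiagonal_succ, add_comm]
  | succ m ih =>
    rw [show 2 * (m + 1) + 1 = 2 * m + 1 + 2 by ring, coeff_add_two_mk_pow_mul_mk_pow, ih, huv,
      sum_range_succ _ (m + 1)]
    ring

theorem coeff_mk_one_pow_mul_mk_neg_one_pow_two_mul (m : ℕ) :
    coeff (2 * m) (mk ((1 : R) ^ ·) * mk ((-1 : R) ^ ·)) = 1 := by
  induction m with
  | zero => simp
  | succ m ih =>
    rw [mul_add_one, coeff_add_two_mk_pow_mul_mk_pow, ih]
    simp [pow_succ, pow_mul]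

theorem coeff_mk_one_pow_mul_mk_neg_one_pow_two_mul_add_one (m : ℕ) :
    coeff (2 * m + 1) (mk ((1 : R) ^ ·) * mk ((-1 : R) ^ ·)) = 0 := by
  induction m with
  | zero => simp [coeff_mul, Nat.antidiagonal_succ]
  | succ m ih =>
    rw [show 2 * (m + 1) + 1 = 2 * m + 1 + 2 by ring, coeff_add_two_mk_pow_mul_mk_pow, ih]
    simp [pow_succ, pow_mul]

end PowerSeries

namespace PreLambdaRing

variable {R : Type*} [CommRing R] (L : PreLambdaRing R) (r : R)

noncomputable def symPowSeries : R⟦X⟧ :=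
  invOfUnit (rescale (-1 : R) (lambdaSeries L r)) 1

noncomputable def adamsSeries : R⟦X⟧ :=
  PowerSeries.mk fun n => adams L n r

theorem coeff_symPowSeries (n : ℕ) : coeff n (symPowSeries L r) = symPow L n r := rfl

theorem adams_zero : adams L 0 r = 0 := by
  simp [adams]

theorem symPow_zero : symPow L 0 r = 1 := by
  simp [symPow]

theorem adamsSeries_eq_rescale :
    adamsSeries L r = rescale (-1 : R) (-(X * logDeriv1 (lambdaSeries L r))) := by
  ext n
  simp only [adamsSeries, adams, coeff_mk, coeff_rescale]

theorem X_mul_derivative_symPowSeries :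
    X * d⁄dX R (symPowSeries L r) = adamsSeries L r * symPowSeries L r := by
  set A := lambdaSeries L r
  set B := rescale (-1 : R) A
  set S := symPowSeries L r
  have hA : constantCoeff A = 1 := by simp [A, lambdaSeries, L.lam_zero]
  have hBS : B * S = 1 :=
    mul_invOfUnit B 1 (by simp [B, ← coeff_zero_eq_constantCoeff_apply, coeff_rescale, hA])
  have hinv : rescale (-1 : R) (invOfUnit A 1) = S := by
    refine left_inv_eq_right_inv ?_ hBS
    rw [mul_comm, ← map_mul, mul_invOfUnit A 1 (by simpa using hA), map_one]
  have hdS : d⁄dX R S = -S ^ 2 * d⁄dX R B := by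
    have h := congrArg (d⁄dX R) hBS
    simp only [Derivation.leibniz, smul_eq_mul, derivative_one] at h
    linear_combination S * h - d⁄dX R S * hBS
  rw [adamsSeries_eq_rescale, logDeriv1, map_neg, map_mul, map_mul, rescale_X, hinv, hdS,
    derivative_rescale]
  simp only [map_neg, map_one]
  ring

theorem map_symPowSeries_eq_mk_pow_mul_mk_pow {K : Type*} [CommRing K] [IsAddTorsionFree K]
    (φ : R →+* K) (u v : K)
    (h : ∀ j, 1 ≤ j → φ (adams L j r) = u ^ j + v ^ j) :
    map φ (symPowSeries L r) = PowerSeries.mk (u ^ ·) * PowerSeries.mk (v ^ ·) := by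
  have hψ :
      map φ (adamsSeries L r) = PowerSeries.mk (u ^ ·) - 1 + (PowerSeries.mk (v ^ ·) - 1) := by
    ext (_ | j)
    · simp [adamsSeries, adams_zero]
    · simp [adamsSeries, h (j + 1) j.succ_pos]
  refine eq_of_X_mul_derivative_eq (by simp) ?_ (X_mul_derivative_mk_pow_mul_mk_pow u v) ?_
  · rw [derivative_map, ← hψ, ← map_X φ, ← map_mul, ← map_mul, X_mul_derivative_symPowSeries]
  · rw [← coeff_zero_eq_constantCoeff_apply, coeff_map, coeff_symPowSeries, symPow_zero, map_one]
    simp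

theorem symPow_apply_eq_coeff {G K : Type*} [Monoid G] [CommRing K]
    [IsAddTorsionFree K] (L : PreLambdaRing (G → K))
    (hL : ∀ j, 1 ≤ j → ∀ (f : G → K) (g : G), adams L j f g = f (g ^ j))
    {f : G → K} {g : G} {u v : K} (hfg : ∀ j, 1 ≤ j → f (g ^ j) = u ^ j + v ^ j) (N : ℕ) :
    symPow L N f g = coeff N (PowerSeries.mk (u ^ ·) * PowerSeries.mk (v ^ ·)) := by
  rw [← L.map_symPowSeries_eq_mk_pow_mul_mk_pow f (Pi.evalRingHom _ g) u v
    fun j hj => by simp [hL j hj, hfg j hj]]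
  rfl

end PreLambdaRing

theorem zpow_eq_zpow_of_pow_eq_one {G₀ : Type*} [GroupWithZero G₀] {ζ : G₀} {n : ℕ}
    (hζ : ζ ^ n = 1) {x y : ℤ} (h : x ≡ y [ZMOD n]) : ζ ^ x = ζ ^ y := by
  obtain rfl | hn := eq_or_ne n 0
  · rw [Int.ModEq, Nat.cast_zero, Int.emod_zero, Int.emod_zero] at h
    rw [h]
  have hζ0 : ζ ≠ 0 := by
    rintro rfl
    simp [zero_pow hn] at hζ
  obtain ⟨q, hq⟩ := h.dvd
  rw [show y = x + n * q by omega, zpow_add₀ hζ0, zpow_mul, zpow_natCast, hζ, one_zpow, mul_one]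

section Dihedral

variable {n : ℕ} {ζ : ℂ} {L : PreLambdaRing (DihedralGroup n → ℂ)}

theorem tauD_r_pow [NeZero n] (hζ : ζ ^ n = 1) (k : ℤ) (a : ZMod n) (j : ℕ) :
    tauD ζ k (DihedralGroup.r a ^ j) = tauD ζ (j * k) (DihedralGroup.r a) := by
  have h : ((a * j : ZMod n).val : ℤ) * k ≡ a.val * (j * k) [ZMOD n] := by
    rw [← mul_assoc]
    refine Int.ModEq.mul_right _ ?_
    rw [← ZMod.intCast_eq_intCast_iff]
    push_cast [ZMod.natCast_zmod_val]
    rfl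
  rw [DihedralGroup.r_pow]
  simp only [tauD]
  rw [zpow_eq_zpow_of_pow_eq_one hζ h, zpow_eq_zpow_of_pow_eq_one hζ h.neg]

theorem tauD_natCast_mul_apply_r (k : ℤ) (a : ZMod n) (j : ℕ) :
    tauD ζ (j * k) (DihedralGroup.r a)
      = (ζ ^ ((a.val : ℤ) * k)) ^ j + (ζ ^ ((a.val : ℤ) * k))⁻¹ ^ j := by
  simp only [tauD]
  rw [show (a.val : ℤ) * (j * k) = a.val * k * j by ring, zpow_neg, zpow_mul, zpow_natCast,
    inv_pow]

theorem tauD_sr_pow (k : ℤ) (a : ZMod n) (j : ℕ) :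
    tauD ζ k (DihedralGroup.sr a ^ j) = 1 ^ j + (-1) ^ j := by
  obtain ⟨q, rfl | rfl⟩ := Nat.even_or_odd' j
  · rw [pow_mul, sq, DihedralGroup.sr_mul_self, one_pow, DihedralGroup.one_def]
    simp [tauD, pow_mul]
  · rw [pow_succ, pow_mul, sq, DihedralGroup.sr_mul_self, one_pow, one_mul]
    simp [tauD, pow_succ, pow_mul]

theorem symPow_tauD_apply_r [NeZero n]
    (hL : ∀ j, 1 ≤ j → ∀ (f : DihedralGroup n → ℂ) (g : DihedralGroup n),
      adams L j f g = f (g ^ j))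
    (hζ : ζ ^ n = 1) (k : ℤ) (a : ZMod n) (N : ℕ) :
    symPow L N (tauD ζ k) (DihedralGroup.r a)
      = coeff N (mk ((ζ ^ ((a.val : ℤ) * k)) ^ ·) * mk ((ζ ^ ((a.val : ℤ) * k))⁻¹ ^ ·)) :=
  L.symPow_apply_eq_coeff hL
    (fun j _ => by rw [tauD_r_pow hζ, tauD_natCast_mul_apply_r]) N

theorem symPow_tauD_apply_sr
    (hL : ∀ j, 1 ≤ j → ∀ (f : DihedralGroup n → ℂ) (g : DihedralGroup n),
      adams L j f g = f (g ^ j))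
    (k : ℤ) (a : ZMod n) (N : ℕ) :
    symPow L N (tauD ζ k) (DihedralGroup.sr a)
      = coeff N (mk ((1 : ℂ) ^ ·) * mk ((-1 : ℂ) ^ ·)) :=
  L.symPow_apply_eq_coeff hL (fun j _ => tauD_sr_pow k a j) N

end Dihedral

/-- For the pre-λ-ring of complex class functions on the dihedral group `D_{2n}` whose
Adams operations are `ψ^m(f)(g) = f(g^m)`:
`S^{2m-1}(τ'_k) = ∑_{i=1}^m τ'_{(2i-1)k}` and `S^{2m}(τ'_k) = ∑_{i=1}^m τ'_{2ik} + χ₁`. -/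
theorem stmt19 (n : ℕ) (hn : 1 ≤ n) (ζ : ℂ) (hζ : IsPrimitiveRoot ζ n) (k : ℤ)
    (L : PreLambdaRing (DihedralGroup n → ℂ))
    (hL : ∀ m, 1 ≤ m → ∀ (f : DihedralGroup n → ℂ) (g : DihedralGroup n),
      adams L m f g = f (g ^ m))
    (m : ℕ) (hm : 1 ≤ m) :
    symPow L (2*m - 1) (tauD ζ k)
        = (∑ i ∈ Finset.range m, tauD ζ ((2*(i+1) - 1 : ℤ) * k)) ∧
    symPow L (2*m) (tauD ζ k)
        = (∑ i ∈ Finset.range m, tauD ζ ((2*(i+1) : ℤ) * k)) + 1 := by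
  have : NeZero n := ⟨by omega⟩
  have hu (a : ZMod n) : ζ ^ ((a.val : ℤ) * k) * (ζ ^ ((a.val : ℤ) * k))⁻¹ = 1 :=
    mul_inv_cancel₀ (zpow_ne_zero _ (hζ.ne_zero (NeZero.ne n)))
  obtain ⟨m, rfl⟩ : ∃ m', m = m' + 1 := ⟨m - 1, by omega⟩
  rw [show 2 * (m + 1) - 1 = 2 * m + 1 by omega]
  constructor <;> funext g
  · rw [Finset.sum_apply]
    cases g with
    | r a =>
      rw [symPow_tauD_apply_r hL hζ.pow_eq_one, coeff_mk_pow_mul_mk_pow_two_mul_add_one (hu a)]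
      refine sum_congr rfl fun i _ => ?_
      rw [show (2 * ((i : ℤ) + 1) - 1) * k = ((2 * i + 1 : ℕ) : ℤ) * k by push_cast; ring,
        tauD_natCast_mul_apply_r]
    | sr a =>
      rw [symPow_tauD_apply_sr hL, coeff_mk_one_pow_mul_mk_neg_one_pow_two_mul_add_one]
      simp [tauD]
  · rw [Pi.add_apply, Finset.sum_apply, Pi.one_apply]
    cases g with
    | r a =>
      rw [symPow_tauD_apply_r hL hζ.pow_eq_one, coeff_mk_pow_mul_mk_pow_two_mul (hu a)]
      refine congrArg (· + 1) (sum_congr rfl fun i _ => ?_)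
      rw [show 2 * ((i : ℤ) + 1) * k = ((2 * (i + 1) : ℕ) : ℤ) * k by push_cast; ring,
        tauD_natCast_mul_apply_r]
    | sr a =>
      rw [symPow_tauD_apply_sr hL, coeff_mk_one_pow_mul_mk_neg_one_pow_two_mul]
      simp [tauD]
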